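/- arXiv:2307.11208 — 10 statements merged into one kernel-verified Lean document; each statement's English description precedes it below -/
import Mathlib

section
/- Let 𝒜 be an abelian category with a set (C_i)_{i∈I} of cogenerators, and let A' →^u A →^v A'' be a composable pair of morphisms with v∘u = 0. If for each i ∈ I the induced sequence Hom(A'', C_i) → Hom(A, C_i) → Hom(A', C_i) is exact, then the sequence (u, v) is exact (Im u = Ker v). -/
open CategoryTheory Limits

universe v u

variable {𝒜 : Type u} [Category.{v} 𝒜] [Abelian 𝒜]

/-- If `𝒜` has a set of cogenerators `(C i)` and the sequences
`Hom(A'', C i) → Hom(A, C i) → Hom(A', C i)` are exact for all `i`,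
then `(u, v)` is exact. -/
theorem statement2 {I : Type w} (C : I → 𝒜)
    (hcogen : ∀ ⦃B D : 𝒜⦄ (f : B ⟶ D), f ≠ 0 → ∃ (i : I) (h : D ⟶ C i), f ≫ h ≠ 0)
    {A' A A'' : 𝒜} (u : A' ⟶ A) (v : A ⟶ A'') (w : u ≫ v = 0)
    (hHom : ∀ (i : I) (g : A ⟶ C i), (u ≫ g = 0 ↔ ∃ h : A'' ⟶ C i, v ≫ h = g)) :
    (ShortComplex.mk u v w).Exact := by
  rw [ShortComplex.exact_iff_kernel_ι_comp_cokernel_π_zero]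
  by_contra hne
  obtain ⟨i, h, hh⟩ := hcogen _ hne
  apply hh
  have hu : u ≫ cokernel.π u ≫ h = 0 := by rw [← Category.assoc, cokernel.condition, zero_comp]
  obtain ⟨h', hh'⟩ := (hHom i (cokernel.π u ≫ h)).1 hu
  show (kernel.ι v ≫ cokernel.π u) ≫ h = 0
  rw [Category.assoc, ← hh', ← Category.assoc, kernel.condition, zero_comp]
end

section
/- Let 𝒜 be an abelian category and 𝒦 a class of objects of 𝒜 closed under isomorphisms and retracts. If every object A of 𝒜 admits a short exact sequence Y ↣ X ↠ A with X ∈ 𝒦 and Y ∈ 𝒦^⊥, then (𝒦, 𝒦^⊥) is a cotorsion theory, i.e. 𝒦 = ^⊥(𝒦^⊥). -/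
open CategoryTheory Limits

universe v u

variable {𝒜 : Type u} [Category.{v} 𝒜] [Abelian 𝒜]

/-- `X ∈ rightPerp K` iff `Hom(−, X)` sends every mono with cokernel in `K`
(equivalently, every short exact sequence ending in `K`) to a surjection. -/
def rightPerp (K : Set 𝒜) : Set 𝒜 :=
  {X | ∀ ⦃A B Q : 𝒜⦄ (i : A ⟶ B) (p : B ⟶ Q) (w : i ≫ p = 0),
    (ShortComplex.mk i p w).ShortExact → Q ∈ K → ∀ g : A ⟶ X, ∃ h : B ⟶ X, i ≫ h = g}

/-- `X ∈ leftPerp K` iff `Hom(X, −)` sends every epi with kernel in `K` to a surjection. -/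
def leftPerp (K : Set 𝒜) : Set 𝒜 :=
  {X | ∀ ⦃A B Q : 𝒜⦄ (i : A ⟶ B) (p : B ⟶ Q) (w : i ≫ p = 0),
    (ShortComplex.mk i p w).ShortExact → A ∈ K → ∀ g : X ⟶ Q, ∃ h : X ⟶ B, h ≫ p = g}

/-- If `K` is closed under isomorphisms and retracts and every object admits a
short exact sequence `Y ↣ X ↠ A` with `X ∈ K`, `Y ∈ K^⊥`, then `(K, K^⊥)` is a
cotorsion theory, i.e. `K = ^⊥(K^⊥)`. -/
theorem statement3 (K : Set 𝒜)
    (hiso : ∀ ⦃X Y : 𝒜⦄, (X ≅ Y) → X ∈ K → Y ∈ K)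
    (hretract : ∀ ⦃X Y : 𝒜⦄ (s : Y ⟶ X) (r : X ⟶ Y), s ≫ r = 𝟙 Y → X ∈ K → Y ∈ K)
    (happrox : ∀ A : 𝒜, ∃ (Y X : 𝒜) (i : Y ⟶ X) (p : X ⟶ A) (w : i ≫ p = 0),
      (ShortComplex.mk i p w).ShortExact ∧ X ∈ K ∧ Y ∈ rightPerp K) :
    leftPerp (rightPerp K) = K := by
  ext Z
  constructor
  · intro hZ
    obtain ⟨Y, W, i, p, w, hse, hW, hY⟩ := happrox Z
    obtain ⟨h, hh⟩ := hZ i p w hse hY (𝟙 Z)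
    exact hretract h p hh hW
  · intro hZ A B Q i p w hse hA g
    haveI : Mono i := hse.mono_f
    haveI : Epi p := hse.epi_g
    -- pull back the short exact sequence along `g`
    let P := pullback p g
    let j : A ⟶ P := pullback.lift i 0 (by simp [w])
    have hjf : j ≫ pullback.fst p g = i := pullback.lift_fst _ _ _
    have wj : j ≫ pullback.snd p g = 0 := pullback.lift_snd _ _ _
    haveI : Mono j := mono_of_mono_fac hjf
    -- `j` is a kernel of `pullback.snd p g`
    have hK : IsLimit (KernelFork.ofι j wj) := by
      refine KernelFork.IsLimit.ofι j wj
        (fun {T} t ht => hse.exact.lift (t ≫ pullback.fst p g) ?_) (fun {T} t ht => ?_)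
        (fun {T} t ht m hm => ?_)
      · dsimp
        rw [Category.assoc, pullback.condition, ← Category.assoc, ht, zero_comp]
      · apply pullback.hom_ext
        · rw [Category.assoc, hjf]
          exact hse.exact.lift_f _ _
        · rw [Category.assoc, wj, comp_zero, ht]
      · dsimp only
        rw [← cancel_mono j, hm]
        apply pullback.hom_ext <;>
          simp [Category.assoc, hjf, wj, ht, hse.exact.lift_f]
    have hexact : (ShortComplex.mk j (pullback.snd p g) wj).Exact :=
      ShortComplex.exact_of_f_is_kernel _ hK
    have hse' : (ShortComplex.mk j (pullback.snd p g) wj).ShortExact :=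
      { exact := hexact }
    -- split it using `A ∈ rightPerp K` and `Z ∈ K`
    obtain ⟨r, hr⟩ := hA j (pullback.snd p g) wj hse' hZ (𝟙 A)
    let sp := ShortComplex.Splitting.ofExactOfRetraction _ hexact r hr hse'.epi_g
    refine ⟨sp.s ≫ pullback.fst p g, ?_⟩
    have hsg : sp.s ≫ pullback.snd p g = 𝟙 Z := sp.s_g
    rw [Category.assoc, pullback.condition, ← Category.assoc, hsg, Category.id_comp]
end

section
/- Let (𝒳, 𝒴) be a cotorsion theory in an abelian category 𝒜. Then 𝒴 is closed under quotients if and only if for every X ∈ 𝒳, every short exact sequence Y → A ↠ X with Y ∈ 𝒴 is right split (the epimorphism A ↠ X has a section). -/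
/-! If `𝒴` is closed under quotients, the kernel of `A ↠ X` is a quotient of `Y`,
so it lies in `𝒴` and `X ∈ ^⊥𝒴` lifts `𝟙 X` along `A ↠ X`. Conversely, to extend `g : A ⟶ Y'`
along `A ↪ B` with cokernel in `𝒳`, push the sequence out along `g`; precomposing its first map
with `Y ↠ Y'` gives an exact sequence `Y → P ↠ Q` with `Y ∈ 𝒴`, which splits by assumption, and a
retraction of `Y' ↪ P` composed with `B ⟶ P` is the extension. -/

open CategoryTheory Limits

universe v u

variable {𝒜 : Type u} [Category.{v} 𝒜] [Abelian 𝒜]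

namespace CategoryTheory.ShortComplex

lemma shortExact_kernel_of_epi {A X : 𝒜} (v : A ⟶ X) [Epi v] :
    (ShortComplex.mk (kernel.ι v) v (kernel.condition v)).ShortExact where
  exact := exact_of_f_is_kernel _ (kernelIsKernel v)

lemma Exact.epi_comp_f {S : ShortComplex 𝒜} (hS : S.Exact) {Y : 𝒜} (p : Y ⟶ S.X₁) [Epi p] :
    (ShortComplex.mk (p ≫ S.f) S.g (by simp)).Exact := by
  let φ : ShortComplex.mk (p ≫ S.f) S.g (by simp) ⟶ S :=
    { τ₁ := p, τ₂ := 𝟙 _, τ₃ := 𝟙 _ }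
  exact (exact_iff_of_epi_of_isIso_of_mono φ).2 hS

noncomputable abbrev pushoutAlong (S : ShortComplex 𝒜) {Y : 𝒜} (g : S.X₁ ⟶ Y) : ShortComplex 𝒜 :=
  ShortComplex.mk (pushout.inr S.f g) (pushout.desc S.g 0 (by simp)) (pushout.inr_desc _ _ _)

variable {S : ShortComplex 𝒜} {Y : 𝒜} (g : S.X₁ ⟶ Y)

lemma inl_pushoutAlong_g : pushout.inl S.f g ≫ (S.pushoutAlong g).g = S.g :=
  pushout.inl_desc _ _ _

lemma ShortExact.pushoutAlong (hS : S.ShortExact) : (S.pushoutAlong g).ShortExact := by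
  have := hS.mono_f
  have := hS.epi_g
  have : Epi (S.pushoutAlong g).g :=
    have : Epi (pushout.inl S.f g ≫ (S.pushoutAlong g).g) := by rwa [inl_pushoutAlong_g]
    epi_of_epi (pushout.inl S.f g) _
  refine { exact := exact_of_g_is_cokernel _ <|
    CokernelCofork.IsColimit.ofπ' _ _ fun {T} t ht => ?_ }
  refine ⟨hS.exact.desc (pushout.inl S.f g ≫ t) ?_, ?_⟩
  · rw [← Category.assoc, pushout.condition, Category.assoc, ht, comp_zero]
  · apply pushout.hom_ext
    · rw [← Category.assoc, inl_pushoutAlong_g, hS.exact.g_desc]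
    · rw [← Category.assoc, (S.pushoutAlong g).zero, zero_comp, ht]

lemma ShortExact.exists_extension_of_pushoutAlong_section (hS : S.ShortExact)
    (s : S.X₃ ⟶ (S.pushoutAlong g).X₂) (hs : s ≫ (S.pushoutAlong g).g = 𝟙 S.X₃) :
    ∃ h : S.X₂ ⟶ Y, S.f ≫ h = g := by
  have hP := hS.pushoutAlong g
  let σ := Splitting.ofExactOfSection _ hP.exact s hs hP.mono_f
  refine ⟨pushout.inl S.f g ≫ σ.r, ?_⟩
  calc S.f ≫ pushout.inl S.f g ≫ σ.r = g ≫ (S.pushoutAlong g).f ≫ σ.r := pushout.condition_assoc _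
    _ = g := by rw [σ.f_r, Category.comp_id]

end CategoryTheory.ShortComplex

lemma exists_section_of_mem_leftPerp {K : Set 𝒜} {A X : 𝒜} (hX : X ∈ leftPerp K)
    (v : A ⟶ X) [Epi v] (hK : kernel v ∈ K) : ∃ s : X ⟶ A, s ≫ v = 𝟙 X :=
  hX _ _ _ (ShortComplex.shortExact_kernel_of_epi v) hK (𝟙 X)

/-- For a cotorsion theory `(𝒳, 𝒴)`, `𝒴` is closed under quotients iff for every
`X ∈ 𝒳`, every exact sequence `Y → A ↠ X` with `Y ∈ 𝒴` is right split. -/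
theorem statement4 (𝒳 𝒴 : Set 𝒜)
    (hX : 𝒳 = leftPerp 𝒴) (hY : 𝒴 = rightPerp 𝒳) :
    (∀ ⦃Y Y' : 𝒜⦄ (p : Y ⟶ Y'), Epi p → Y ∈ 𝒴 → Y' ∈ 𝒴) ↔
      (∀ ⦃Y A X : 𝒜⦄ (u : Y ⟶ A) (v : A ⟶ X) (w : u ≫ v = 0),
        (ShortComplex.mk u v w).Exact → Epi v → Y ∈ 𝒴 → X ∈ 𝒳 →
          ∃ s : X ⟶ A, s ≫ v = 𝟙 X) := by
  constructor
  · intro hquot Y A X u v w hex _ hYmem hXmem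
    have : Epi (kernel.lift v u w) := (ShortComplex.exact_iff_epi_kernel_lift _).1 hex
    rw [hX] at hXmem
    exact exists_section_of_mem_leftPerp hXmem v (hquot _ this hYmem)
  · intro hsplit Y Y' p hp hYmem
    rw [hY]
    intro A B Q i q w hS hQ g
    have hP := hS.pushoutAlong g
    obtain ⟨s, hs⟩ := hsplit _ _ _ (hP.exact.epi_comp_f p) hP.epi_g hYmem hQ
    exact hS.exists_extension_of_pushoutAlong_section g s hs
end

section
/- Let (𝒳, 𝒴) be a cotorsion theory in an abelian category 𝒜. If 𝒳 is closed under kernels of epimorphisms between its objects, and every object of 𝒜 admits an epimorphism from an object of 𝒳, then 𝒴 is closed under cokernels of monomorphisms between its objects (i.e., if Y' ↣ Y ↠ Y'' is exact with Y', Y ∈ 𝒴 then Y'' ∈ 𝒴). -/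
open CategoryTheory Limits

universe v u

variable {𝒜 : Type u} [Category.{v} 𝒜] [Abelian 𝒜]

/-- If `(𝒳, 𝒴)` is a cotorsion theory, `𝒳` is closed under kernels of epimorphisms
between its objects, and `𝒜` has enough `𝒳` objects, then `𝒴` is closed under
cokernels of monomorphisms between its objects. -/
theorem statement5 (𝒳 𝒴 : Set 𝒜)
    (hX : 𝒳 = leftPerp 𝒴) (hY : 𝒴 = rightPerp 𝒳)
    (hXleftExact : ∀ ⦃X' X X'' : 𝒜⦄ (i : X' ⟶ X) (p : X ⟶ X'') (w : i ≫ p = 0),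
      (ShortComplex.mk i p w).ShortExact → X ∈ 𝒳 → X'' ∈ 𝒳 → X' ∈ 𝒳)
    (henough : ∀ A : 𝒜, ∃ (X : 𝒜) (p : X ⟶ A), X ∈ 𝒳 ∧ Epi p)
    {Y' Y Y'' : 𝒜} (i : Y' ⟶ Y) (p : Y ⟶ Y'') (w : i ≫ p = 0)
    (hse : (ShortComplex.mk i p w).ShortExact)
    (hY' : Y' ∈ 𝒴) (hYmem : Y ∈ 𝒴) :
    Y'' ∈ 𝒴 := by
  have hYr : Y ∈ rightPerp 𝒳 := hY ▸ hYmem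
  rw [hY]
  intro A B Q i' p' w' hse' hQ g
  have hmono : Mono i' := hse'.mono_f
  have hepi : Epi p' := hse'.epi_g
  have hpe : Epi p := hse.epi_g
  obtain ⟨X, e, hXmem, he⟩ := henough B
  -- `P` is the pullback of `i' : A ⟶ B` along `e : X ⟶ B`.
  let u : pullback i' e ⟶ A := pullback.fst i' e
  let k : pullback i' e ⟶ X := pullback.snd i' e
  have hsq : u ≫ i' = k ≫ e := pullback.condition
  have hu : Epi u := Abelian.epi_pullback_of_epi_g i' e
  have hk : Mono k := inferInstance
  have wf : k ≫ (e ≫ p') = 0 := by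
    rw [← Category.assoc, ← hsq, Category.assoc, w', comp_zero]
  -- `k` is a kernel of `e ≫ p'`.
  have hlim : IsLimit (KernelFork.ofι k wf) := by
    refine KernelFork.IsLimit.ofι' k wf (fun {T} t ht => ?_)
    have ht' : (t ≫ e) ≫ p' = 0 := by rw [Category.assoc]; exact ht
    obtain ⟨s, hs⟩ := KernelFork.IsLimit.lift' hse'.fIsKernel (t ≫ e) ht'
    exact ⟨pullback.lift s t hs, pullback.lift_snd _ _ _⟩
  -- the short complex `P ⟶ X ⟶ Q` is short exact
  have hepf : Epi (e ≫ p') := epi_comp e p'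
  have sesX : (ShortComplex.mk k (e ≫ p') wf).ShortExact :=
    { exact := ShortComplex.exact_of_f_is_kernel _ hlim
      mono_f := hk
      epi_g := hepf }
  -- so `P ∈ 𝒳`
  have hP : pullback i' e ∈ 𝒳 := hXleftExact k (e ≫ p') wf sesX hXmem hQ
  -- lift `u ≫ g : P ⟶ Y''` through `p : Y ⟶ Y''` using `P ∈ leftPerp 𝒴`
  obtain ⟨v, hv⟩ := (hX ▸ hP : pullback i' e ∈ leftPerp 𝒴) i p w hse hY' (u ≫ g)
  -- extend `v : P ⟶ Y` along `k : P ⟶ X` using `Y ∈ rightPerp 𝒳`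
  obtain ⟨t, ht⟩ := hYr k (e ≫ p') wf sesX hQ v
  -- `t ≫ p : X ⟶ Y''` kills the kernel of `e`
  have hker : kernel.ι e ≫ (t ≫ p) = 0 := by
    have h0 : (0 : kernel e ⟶ A) ≫ i' = kernel.ι e ≫ e := by
      rw [zero_comp, kernel.condition]
    have hfac : pullback.lift 0 (kernel.ι e) h0 ≫ k = kernel.ι e :=
      pullback.lift_snd _ _ _
    have hfst : pullback.lift 0 (kernel.ι e) h0 ≫ u = 0 :=
      pullback.lift_fst _ _ _
    calc kernel.ι e ≫ t ≫ p
        = pullback.lift 0 (kernel.ι e) h0 ≫ (k ≫ t) ≫ p := by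
          simp only [← Category.assoc]; rw [hfac]
      _ = pullback.lift 0 (kernel.ι e) h0 ≫ v ≫ p := by rw [ht]
      _ = pullback.lift 0 (kernel.ι e) h0 ≫ u ≫ g := by rw [hv]
      _ = 0 := by rw [← Category.assoc, hfst, zero_comp]
  refine ⟨Abelian.epiDesc e (t ≫ p) hker, ?_⟩
  -- check `i' ≫ h = g` after precomposing with the epi `u`
  rw [← cancel_epi u, ← Category.assoc, hsq, Category.assoc,
    Abelian.comp_epiDesc, ← Category.assoc, ht, hv]
end

section
/- Let F : 𝒜 ⇄ 𝒜' : G be an adjoint pair of additive functors between abelian categories, 𝒦 a class of objects of 𝒜 such that every object of 𝒜 receives an epimorphism from an object of 𝒦, and 𝒦' a class of objects of 𝒜' with F(𝒦) ⊆ 𝒦'. Then G preserves epimorphisms whose kernel lies in 𝒦'^⊥. -/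
open CategoryTheory Limits

universe v u v' u'

variable {𝒜 : Type u} [Category.{v} 𝒜] [Abelian 𝒜]

/-- Splitting formulation of the right orthogonal class: `Y ∈ rightPerpSplit K` iff
every short exact sequence `Y ↣ E ↠ Q` with `Q ∈ K` splits. -/
def rightPerpSplit (K : Set 𝒜) : Set 𝒜 :=
  {Y | ∀ ⦃E Q : 𝒜⦄ (i : Y ⟶ E) (p : E ⟶ Q) (w : i ≫ p = 0),
    (ShortComplex.mk i p w).ShortExact → Q ∈ K → ∃ r : E ⟶ Y, i ≫ r = 𝟙 Y}

/-!
Pull the epimorphism `p : E ⟶ Q` back along the adjoint `F X ⟶ Q` of an epimorphism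
`X ⟶ G Q` with `X ∈ 𝒦`. The resulting extension of `F X ∈ 𝒦'` by `ker p ∈ 𝒦'^⊥` splits,
so `F X ⟶ Q` lifts through `p`; by adjunction `X ⟶ G Q` then factors through `G p`,
which is therefore an epimorphism.
-/

section PullbackExtension

variable {E Q Y : 𝒜} (p : E ⟶ Q) (g : Y ⟶ Q)

noncomputable abbrev pullbackExtension : ShortComplex 𝒜 :=
  ShortComplex.mk (pullback.lift (kernel.ι p) 0 (by simp) : kernel p ⟶ pullback p g)
    (pullback.snd p g) (pullback.lift_snd _ _ _)

lemma pullbackExtension_exact : (pullbackExtension p g).Exact := by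
  rw [ShortComplex.exact_iff_exact_up_to_refinements]
  intro T x hx
  refine ⟨T, 𝟙 T, inferInstance, kernel.lift p (x ≫ pullback.fst p g) ?_, ?_⟩
  · rw [Category.assoc, pullback.condition, ← Category.assoc, hx, zero_comp]
  · apply pullback.hom_ext
    · simp only [Category.id_comp, Category.assoc, pullback.lift_fst, kernel.lift_ι]
    · simp only [Category.id_comp, Category.assoc, pullback.lift_snd, comp_zero]
      exact hx

lemma pullbackExtension_shortExact [Epi p] : (pullbackExtension p g).ShortExact where
  exact := pullbackExtension_exact p g
  mono_f := mono_of_mono_fac (pullback.lift_fst (kernel.ι p) 0 _)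
  epi_g := Abelian.epi_pullback_of_epi_f p g

lemma exists_lift_of_kernel_mem_rightPerpSplit [Epi p] {K : Set 𝒜}
    (hker : kernel p ∈ rightPerpSplit K) (hY : Y ∈ K) : ∃ h : Y ⟶ E, h ≫ p = g := by
  have hse := pullbackExtension_shortExact p g
  obtain ⟨r, hr⟩ := hker _ _ _ hse hY
  let σ := ShortComplex.Splitting.ofExactOfRetraction _ hse.exact r hr hse.epi_g
  refine ⟨σ.s ≫ pullback.fst p g, ?_⟩
  rw [Category.assoc, pullback.condition, ← Category.assoc, σ.s_g, Category.id_comp]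

end PullbackExtension

lemma CategoryTheory.Adjunction.epi_map_of_homEquiv_symm_factors {𝒞 : Type u} [Category.{v} 𝒞]
    {𝒟 : Type u'} [Category.{v'} 𝒟] {F : 𝒞 ⥤ 𝒟} {G : 𝒟 ⥤ 𝒞} (adj : F ⊣ G)
    {E Q : 𝒟} {p : E ⟶ Q} {X : 𝒞} (q : X ⟶ G.obj Q) [Epi q] (h : F.obj X ⟶ E)
    (hh : h ≫ p = (adj.homEquiv X Q).symm q) : Epi (G.map p) := by
  have hfac : adj.homEquiv X E h ≫ G.map p = q := by
    rw [← Adjunction.homEquiv_naturality_right, hh, Equiv.apply_symm_apply]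
  have : Epi (adj.homEquiv X E h ≫ G.map p) := hfac ▸ inferInstance
  exact epi_of_epi (adj.homEquiv X E h) (G.map p)

theorem statement6_general {𝒜' : Type u'} [Category.{v'} 𝒜'] [Abelian 𝒜']
    (F : 𝒜 ⥤ 𝒜') (G : 𝒜' ⥤ 𝒜) (adj : F ⊣ G)
    (K : Set 𝒜) (K' : Set 𝒜')
    (henough : ∀ A : 𝒜, ∃ (X : 𝒜) (p : X ⟶ A), X ∈ K ∧ Epi p)
    (hFK : ∀ X ∈ K, F.obj X ∈ K')
    {E Q : 𝒜'} (p : E ⟶ Q) (hp : Epi p) (hker : kernel p ∈ rightPerpSplit K') :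
    Epi (G.map p) := by
  obtain ⟨X, q, hXK, hq⟩ := henough (G.obj Q)
  obtain ⟨h, hh⟩ :=
    exists_lift_of_kernel_mem_rightPerpSplit p ((adj.homEquiv X Q).symm q) hker (hFK X hXK)
  exact adj.epi_map_of_homEquiv_symm_factors q h hh

/-- If every object of `𝒜` receives an epimorphism from an object of `𝒦` and
`F(𝒦) ⊆ 𝒦'`, then the right adjoint `G` preserves epimorphisms whose kernel lies
in `𝒦'^⊥`. -/
theorem statement6 {𝒜' : Type u'} [Category.{v'} 𝒜'] [Abelian 𝒜']
    (F : 𝒜 ⥤ 𝒜') (G : 𝒜' ⥤ 𝒜) [F.Additive] [G.Additive] (adj : F ⊣ G)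
    (K : Set 𝒜) (K' : Set 𝒜')
    (henough : ∀ A : 𝒜, ∃ (X : 𝒜) (p : X ⟶ A), X ∈ K ∧ Epi p)
    (hFK : ∀ X ∈ K, F.obj X ∈ K')
    {E Q : 𝒜'} (p : E ⟶ Q) (hp : Epi p) (hker : kernel p ∈ rightPerpSplit K') :
    Epi (G.map p) :=
  statement6_general F G adj K K' henough hFK p hp hker
end

section
/- Let (T, H, C) be a biadditive THC-situation between abelian categories with 𝒜₃ having enough injectives and 𝒜₁, 𝒜₂ having enough flat objects. Then the class ℱ of flat objects of 𝒜₂ is left exact: if P' ↣ P ↠ P'' is a short exact sequence in 𝒜₂ with P, P'' flat, then P' is flat. -/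
open CategoryTheory Limits Opposite
open scoped Pseudoelement

universe w v u v₁ u₁ v₂ u₂ v₃ u₃

/-- A biadditive THC-situation (adjunction of two variables) between three
abelian categories: bifunctors `T`, `H`, `C` with adjunctions
`Hom(T(X₁,X₂),X₃) ≅ Hom(X₁,H(X₂,X₃)) ≅ Hom(X₂,C(X₁,X₃))`, all biadditive. -/
structure THC (𝒜₁ : Type u₁) (𝒜₂ : Type u₂) (𝒜₃ : Type u₃)
    [Category.{v₁} 𝒜₁] [Category.{v₂} 𝒜₂] [Category.{v₃} 𝒜₃]
    [Abelian 𝒜₁] [Abelian 𝒜₂] [Abelian 𝒜₃] where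
  T : 𝒜₁ ⥤ 𝒜₂ ⥤ 𝒜₃
  H : 𝒜₂ᵒᵖ ⥤ 𝒜₃ ⥤ 𝒜₁
  C : 𝒜₁ᵒᵖ ⥤ 𝒜₃ ⥤ 𝒜₂
  adjT₂ : ∀ X₁ : 𝒜₁, T.obj X₁ ⊣ C.obj (op X₁)
  adjT₁ : ∀ X₂ : 𝒜₂, T.flip.obj X₂ ⊣ H.obj (op X₂)
  addT₁ : ∀ X₂ : 𝒜₂, (T.flip.obj X₂).Additive
  addT₂ : ∀ X₁ : 𝒜₁, (T.obj X₁).Additive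
  addH₁ : ∀ X₃ : 𝒜₃, (H.flip.obj X₃).Additive
  addH₂ : ∀ X₂ : 𝒜₂ᵒᵖ, (H.obj X₂).Additive
  addC₁ : ∀ X₃ : 𝒜₃, (C.flip.obj X₃).Additive
  addC₂ : ∀ X₁ : 𝒜₁ᵒᵖ, (C.obj X₁).Additive

variable {𝒜₁ : Type u₁} {𝒜₂ : Type u₂} {𝒜₃ : Type u₃}
  [Category.{v₁} 𝒜₁] [Category.{v₂} 𝒜₂] [Category.{v₃} 𝒜₃]
  [Abelian 𝒜₁] [Abelian 𝒜₂] [Abelian 𝒜₃]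

/-- An object `P` of `𝒜₂` is flat if `T(−, P)` preserves monomorphisms. -/
def THC.Flat₂ (S : THC 𝒜₁ 𝒜₂ 𝒜₃) (P : 𝒜₂) : Prop :=
  ∀ ⦃X Y : 𝒜₁⦄ (f : X ⟶ Y), Mono f → Mono ((S.T.flip.obj P).map f)

/-- An object `P` of `𝒜₁` is flat if `T(P, −)` preserves monomorphisms. -/
def THC.Flat₁ (S : THC 𝒜₁ 𝒜₂ 𝒜₃) (P : 𝒜₁) : Prop :=
  ∀ ⦃X Y : 𝒜₂⦄ (f : X ⟶ Y), Mono f → Mono ((S.T.obj P).map f)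

/-- The class of flat objects of `𝒜₂` is left exact: the kernel of an epimorphism
between flat objects is flat. -/
theorem statement11 (S : THC 𝒜₁ 𝒜₂ 𝒜₃) [EnoughInjectives 𝒜₃]
    (hf1 : ∀ X : 𝒜₁, ∃ (P : 𝒜₁) (p : P ⟶ X), S.Flat₁ P ∧ Epi p)
    (hf2 : ∀ X : 𝒜₂, ∃ (P : 𝒜₂) (p : P ⟶ X), S.Flat₂ P ∧ Epi p)
    {P' P P'' : 𝒜₂} (i : P' ⟶ P) (p : P ⟶ P'') (w : i ≫ p = 0)
    (hse : (ShortComplex.mk i p w).ShortExact)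
    (hP : S.Flat₂ P) (hP'' : S.Flat₂ P'') :
    S.Flat₂ P' := by
  have hi : Mono i := hse.mono_f
  have hp : Epi p := hse.epi_g
  -- Step A: for every `X`, `T(X, i)` is a monomorphism (since `P''` is flat and
  -- there are enough flat objects in `𝒜₁`).
  have key : ∀ X : 𝒜₁, Mono ((S.T.obj X).map i) := by
    intro X
    obtain ⟨Q, q, hQ, hq⟩ := hf1 X
    set k : kernel q ⟶ Q := kernel.ι q with hk
    have wk : k ≫ q = 0 := kernel.condition q
    -- exactness of the rows `T(W,P') → T(W,P) → T(W,P'')`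
    have rowexact : ∀ W : 𝒜₁, (ShortComplex.mk ((S.T.obj W).map i) ((S.T.obj W).map p)
        (by haveI : (S.T.obj W).Additive := S.addT₂ W
            rw [← Functor.map_comp, w, Functor.map_zero])).Exact := by
      intro W
      haveI : (S.T.obj W).Additive := S.addT₂ W
      haveI : (S.T.obj W).PreservesZeroMorphisms :=
        Functor.preservesZeroMorphisms_of_additive _
      haveI : PreservesColimitsOfSize.{0, 0} (S.T.obj W) :=
        (S.adjT₂ W).leftAdjoint_preservesColimits
      exact hse.exact.map_of_epi_of_preservesCokernel (S.T.obj W) hp inferInstance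
    -- exactness of the columns `T(K,M) → T(Q,M) → T(X,M)`
    have colexact : ∀ M : 𝒜₂, (ShortComplex.mk ((S.T.flip.obj M).map k)
        ((S.T.flip.obj M).map q)
        (by haveI : (S.T.flip.obj M).Additive := S.addT₁ M
            rw [← Functor.map_comp, wk, Functor.map_zero])).Exact := by
      intro M
      haveI : (S.T.flip.obj M).Additive := S.addT₁ M
      haveI : (S.T.flip.obj M).PreservesZeroMorphisms :=
        Functor.preservesZeroMorphisms_of_additive _
      haveI : PreservesColimitsOfSize.{0, 0} (S.T.flip.obj M) :=
        (S.adjT₁ M).leftAdjoint_preservesColimits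
      have hkq : (ShortComplex.mk k q wk).Exact :=
        ShortComplex.exact_of_f_is_kernel _ (kernelIsKernel q)
      exact hkq.map_of_epi_of_preservesCokernel (S.T.flip.obj M) hq inferInstance
    -- monomorphisms known from flatness
    have monoTQi : Mono ((S.T.obj Q).map i) := hQ i hi
    have monoTkP'' : Mono ((S.T.flip.obj P'').map k) := hP'' k inferInstance
    -- epimorphism from left adjointness
    have epiTqP' : Epi ((S.T.flip.obj P').map q) := by
      haveI : (S.T.flip.obj P').IsLeftAdjoint := (S.adjT₁ P').isLeftAdjoint
      infer_instance
    -- the commuting squares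
    have sq : ∀ {M M' : 𝒜₂} (m : M ⟶ M') {W W' : 𝒜₁} (g : W ⟶ W'),
        (S.T.flip.obj M).map g ≫ (S.T.obj W').map m
          = (S.T.obj W).map m ≫ (S.T.flip.obj M').map g := by
      intro M M' m W W' g
      simpa using ((S.T.map g).naturality m).symm
    -- now the diagram chase on pseudoelements
    apply Abelian.Pseudoelement.mono_of_zero_of_map_zero
    intro t ht
    obtain ⟨s, hs⟩ :=
      Abelian.Pseudoelement.pseudo_surjective_of_epi ((S.T.flip.obj P').map q) t
    -- push `s` into `T(Q,P)`
    have hs' : (S.T.flip.obj P).map q ((S.T.obj Q).map i s) = 0 := by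
      rw [← Abelian.Pseudoelement.comp_apply, ← sq i q,
        Abelian.Pseudoelement.comp_apply, hs, ht]
    obtain ⟨r, hr⟩ := Abelian.Pseudoelement.pseudo_exact_of_exact (colexact P) _ hs'
    -- `r ∈ T(K,P)` maps to `0` in `T(K,P'')`
    have hr0 : (S.T.obj (kernel q)).map p r = 0 := by
      apply Abelian.Pseudoelement.pseudo_injective_of_mono ((S.T.flip.obj P'').map k)
      rw [Abelian.Pseudoelement.apply_zero, ← Abelian.Pseudoelement.comp_apply,
        ← sq p k, Abelian.Pseudoelement.comp_apply, hr,
        ← Abelian.Pseudoelement.comp_apply, ← Functor.map_comp, w]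
      haveI : (S.T.obj Q).Additive := S.addT₂ Q
      rw [Functor.map_zero, Abelian.Pseudoelement.zero_apply]
    obtain ⟨r', hr'⟩ :=
      Abelian.Pseudoelement.pseudo_exact_of_exact (rowexact (kernel q)) _ hr0
    -- compare `s` with the image of `r'`
    have hcs : (S.T.flip.obj P').map k r' = s := by
      apply Abelian.Pseudoelement.pseudo_injective_of_mono ((S.T.obj Q).map i)
      rw [← Abelian.Pseudoelement.comp_apply, sq i k,
        Abelian.Pseudoelement.comp_apply, hr', hr]
    -- conclude
    rw [← hs, ← hcs, ← Abelian.Pseudoelement.comp_apply, ← Functor.map_comp, wk]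
    haveI : (S.T.flip.obj P').Additive := S.addT₁ P'
    rw [Functor.map_zero, Abelian.Pseudoelement.zero_apply]
  -- Now prove flatness of `P'` using enough injectives in `𝒜₃`.
  intro X Y f hf
  have m2 : Mono ((S.T.flip.obj P).map f) := hP f hf
  -- extension property along `T(f,P')` into injectives
  have ext : ∀ (J : 𝒜₃) (_ : Injective J) (h : (S.T.flip.obj P').obj X ⟶ J),
      ∃ ψ : (S.T.flip.obj P').obj Y ⟶ J, (S.T.flip.obj P').map f ≫ ψ = h := by
    intro J hJ h
    have m1 : Mono ((S.T.obj X).map i) := key X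
    refine ⟨(S.T.obj Y).map i ≫
      Injective.factorThru (Injective.factorThru h ((S.T.obj X).map i))
        ((S.T.flip.obj P).map f), ?_⟩
    have sq' : (S.T.flip.obj P').map f ≫ (S.T.obj Y).map i
        = (S.T.obj X).map i ≫ (S.T.flip.obj P).map f := by
      simpa using ((S.T.map f).naturality i)
    rw [← Category.assoc, sq', Category.assoc, Injective.comp_factorThru,
      Injective.comp_factorThru]
  -- conclude that `T(f,P')` is mono via its kernel
  set u := (S.T.flip.obj P').map f with hu
  apply Abelian.mono_of_kernel_ι_eq_zero
  have mκ : Mono (kernel.ι u) := inferInstance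
  obtain ⟨ψ, hψ⟩ := ext (Injective.under (kernel u)) inferInstance
    (Injective.factorThru (Injective.ι (kernel u)) (kernel.ι u))
  have h0 : Injective.ι (kernel u) = 0 := by
    rw [← Injective.comp_factorThru (Injective.ι (kernel u)) (kernel.ι u), ← hψ,
      ← Category.assoc, kernel.condition, zero_comp]
  have : IsZero (kernel u) := by
    rw [IsZero.iff_id_eq_zero]
    rw [← cancel_mono (Injective.ι (kernel u)), h0, comp_zero, zero_comp]
  exact this.eq_of_src _ _
end

section
/- Let (T, H, C) be a biadditive THC-situation between abelian categories. For every object A₁ of 𝒜₁, the functor T(A₁, −) : 𝒜₂ → 𝒜₃ preserves monomorphisms whose cokernel is a flat object of 𝒜₂. -/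
open CategoryTheory Limits Opposite

universe w v u v₁ u₁ v₂ u₂ v₃ u₃

variable {𝒜₁ : Type u₁} {𝒜₂ : Type u₂} {𝒜₃ : Type u₃}
  [Category.{v₁} 𝒜₁] [Category.{v₂} 𝒜₂] [Category.{v₃} 𝒜₃]
  [Abelian 𝒜₁] [Abelian 𝒜₂] [Abelian 𝒜₃]

/-- A functor preserving zero morphisms and the relevant colimit maps a
"cokernel sequence" to an exact sequence. -/
lemma map_exact_of_isCokernel {C : Type*} {D : Type*} [Category C] [Category D]
    [Abelian C] [Abelian D] (G : C ⥤ D) [G.PreservesZeroMorphisms]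
    {X Y Z : C} (f : X ⟶ Y) (g : Y ⟶ Z) (w : f ≫ g = 0)
    (hg : IsColimit (CokernelCofork.ofπ g w)) [PreservesColimit (parallelPair f 0) G] :
    (ShortComplex.mk (G.map f) (G.map g)
      (by rw [← G.map_comp, w, G.map_zero])).Exact :=
  ShortComplex.exact_of_g_is_cokernel _
    (CokernelCofork.mapIsColimit (CokernelCofork.ofπ g w) hg G)

open CategoryTheory.Abelian Pseudoelement in
attribute [local instance] CategoryTheory.Abelian.Pseudoelement.objectToSort
  CategoryTheory.Abelian.Pseudoelement.homToFun in
/-- For every object `A₁` of `𝒜₁`, the functor `T(A₁, −)` preserves monomorphisms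
with flat cokernel. -/
theorem statement12 (S : THC 𝒜₁ 𝒜₂ 𝒜₃) [EnoughInjectives 𝒜₃]
    (hf1 : ∀ X : 𝒜₁, ∃ (P : 𝒜₁) (p : P ⟶ X), S.Flat₁ P ∧ Epi p)
    (hf2 : ∀ X : 𝒜₂, ∃ (P : 𝒜₂) (p : P ⟶ X), S.Flat₂ P ∧ Epi p)
    (A₁ : 𝒜₁) {X Y : 𝒜₂} (f : X ⟶ Y) (hf : Mono f)
    (hcoker : S.Flat₂ (cokernel f)) :
    Mono ((S.T.obj A₁).map f) := by
  classical
  -- Choose a flat "presentation" `R ⟶ F ⟶ A₁ ⟶ 0` of `A₁` in `𝒜₁`.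
  obtain ⟨F, p, hF, hp⟩ := hf1 A₁
  set R : 𝒜₁ := kernel p with hR
  set r : R ⟶ F := kernel.ι p with hr
  set P : 𝒜₂ := cokernel f with hP
  set π : Y ⟶ P := cokernel.π f with hπ
  -- additivity instances
  haveI := S.addT₂ A₁; haveI := S.addT₂ F; haveI := S.addT₂ R
  haveI := S.addT₁ X; haveI := S.addT₁ Y; haveI := S.addT₁ P
  -- left adjoints preserve colimits
  haveI := (S.adjT₂ A₁).leftAdjoint_preservesColimits
  haveI := (S.adjT₂ F).leftAdjoint_preservesColimits
  haveI := (S.adjT₂ R).leftAdjoint_preservesColimits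
  haveI := (S.adjT₁ X).leftAdjoint_preservesColimits
  haveI := (S.adjT₁ Y).leftAdjoint_preservesColimits
  -- `p` is the cokernel of its kernel `r`
  have hpcoker : IsColimit (CokernelCofork.ofπ p (kernel.condition p)) :=
    Abelian.epiIsCokernelOfKernel (KernelFork.ofι (kernel.ι p) (kernel.condition p))
      (kernelIsKernel p)
  -- exact columns
  have E2 := Pseudoelement.pseudo_exact_of_exact
    (map_exact_of_isCokernel (S.T.flip.obj Y) r p (kernel.condition p) hpcoker)
  -- exact row at `T(R, Y)`
  have E3 := Pseudoelement.pseudo_exact_of_exact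
    (map_exact_of_isCokernel (S.T.obj R) f π (cokernel.condition f)
      (cokernelIsCokernel f))
  -- epi column map at `X`
  haveI hpX : Epi ((S.T.flip.obj X).map p) := inferInstance
  -- monos from flatness
  haveI E4 : Mono ((S.T.obj F).map f) := hF f hf
  haveI E5 : Mono ((S.T.flip.obj P).map r) := hcoker r inferInstance
  -- the pseudoelement chase
  apply Pseudoelement.mono_of_zero_of_map_zero
  intro x hx
  obtain ⟨x', hx'⟩ := Pseudoelement.pseudo_surjective_of_epi ((S.T.flip.obj X).map p) x
  -- naturality squares (note `(S.T.flip.obj B).map q = (S.T.map q).app B`)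
  have nat : ∀ {A A' : 𝒜₁} (q : A ⟶ A') {B B' : 𝒜₂} (g : B ⟶ B'),
      (S.T.flip.obj B).map q ≫ (S.T.obj A').map g
        = (S.T.obj A).map g ≫ (S.T.flip.obj B').map q := by
    intro A A' q B B' g
    exact ((S.T.map q).naturality g).symm
  set y' := (S.T.obj F).map f x' with hy'
  have hy'0 : (S.T.flip.obj Y).map p y' = 0 := by
    rw [hy', ← Pseudoelement.comp_apply, ← nat p f, Pseudoelement.comp_apply, hx', hx]
  obtain ⟨y'', hy''⟩ := E2 y' hy'0
  have hy''P : (S.T.obj R).map π y'' = 0 := by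
    apply Pseudoelement.zero_of_map_zero _
      (Pseudoelement.pseudo_injective_of_mono ((S.T.flip.obj P).map r))
    rw [← Pseudoelement.comp_apply, ← nat r π, Pseudoelement.comp_apply, hy'', hy',
      ← Pseudoelement.comp_apply, ← Functor.map_comp, cokernel.condition,
      Functor.map_zero, Pseudoelement.zero_apply]
  obtain ⟨x'', hx''⟩ := E3 y'' hy''P
  have hxx : (S.T.flip.obj X).map r x'' = x' := by
    apply Pseudoelement.pseudo_injective_of_mono ((S.T.obj F).map f)
    rw [← Pseudoelement.comp_apply, nat r f, Pseudoelement.comp_apply, hx'', hy'', hy']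
  have : x = ((S.T.flip.obj X).map r ≫ (S.T.flip.obj X).map p) x'' := by
    rw [Pseudoelement.comp_apply, hxx, hx']
  rw [this, ← Functor.map_comp, kernel.condition, Functor.map_zero,
    Pseudoelement.zero_apply]
end

section
/- Let (T, H, C) be a biadditive THC-situation between abelian categories. Given epimorphisms u₁ : A₁ ↠ B₁ in 𝒜₁ and u₂ : A₂ ↠ B₂ in 𝒜₂, the commutative square with vertices T(A₁,A₂), T(A₁,B₂), T(B₁,A₂), T(B₁,B₂) and edges T(u₁,−) and T(−,u₂) is a pushout square in 𝒜₃. -/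
open CategoryTheory Limits Opposite

universe w v u v₁ u₁ v₂ u₂ v₃ u₃

variable {𝒜₁ : Type u₁} {𝒜₂ : Type u₂} {𝒜₃ : Type u₃}
  [Category.{v₁} 𝒜₁] [Category.{v₂} 𝒜₂] [Category.{v₃} 𝒜₃]
  [Abelian 𝒜₁] [Abelian 𝒜₂] [Abelian 𝒜₃]

/-- For epimorphisms `u₁ : A₁ ↠ B₁` and `u₂ : A₂ ↠ B₂`, the square
`T(A₁,A₂) → T(A₁,B₂), T(A₁,A₂) → T(B₁,A₂), … → T(B₁,B₂)` is a pushout. -/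
theorem statement13 (S : THC 𝒜₁ 𝒜₂ 𝒜₃)
    {A₁ B₁ : 𝒜₁} (u₁ : A₁ ⟶ B₁) (hu₁ : Epi u₁)
    {A₂ B₂ : 𝒜₂} (u₂ : A₂ ⟶ B₂) (hu₂ : Epi u₂) :
    IsPushout ((S.T.obj A₁).map u₂) ((S.T.map u₁).app A₂)
      ((S.T.map u₁).app B₂) ((S.T.obj B₁).map u₂) := by
  haveI := hu₁; haveI := hu₂
  haveI := S.addT₂ A₁
  haveI := S.addC₂ (op B₁)
  haveI : (S.T.obj A₁).IsLeftAdjoint := (S.adjT₂ A₁).isLeftAdjoint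
  haveI : (S.T.obj B₁).IsLeftAdjoint := (S.adjT₂ B₁).isLeftAdjoint
  have hK : ∀ X₂ : 𝒜₂, Epi ((S.T.map u₁).app X₂) := fun X₂ => by
    haveI : (S.T.flip.obj X₂).IsLeftAdjoint := (S.adjT₁ X₂).isLeftAdjoint
    exact (inferInstance : Epi ((S.T.flip.obj X₂).map u₁))
  haveI := hK A₂; haveI := hK B₂; haveI := hK (kernel u₂)
  have w : (S.T.obj A₁).map u₂ ≫ (S.T.map u₁).app B₂
      = (S.T.map u₁).app A₂ ≫ (S.T.obj B₁).map u₂ := (S.T.map u₁).naturality u₂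
  set adj := S.adjT₂ B₁ with hadj
  have key : ∀ {W : 𝒜₃} (inl : (S.T.obj A₁).obj B₂ ⟶ W) (inr : (S.T.obj B₁).obj A₂ ⟶ W),
      (S.T.obj A₁).map u₂ ≫ inl = (S.T.map u₁).app A₂ ≫ inr →
      ∃ l : (S.T.obj B₁).obj B₂ ⟶ W,
        (S.T.map u₁).app B₂ ≫ l = inl ∧ (S.T.obj B₁).map u₂ ≫ l = inr := by
    intro W inl inr hc
    have h0 : (S.T.obj B₁).map (kernel.ι u₂) ≫ inr = 0 := by
      rw [← cancel_epi ((S.T.map u₁).app (kernel u₂)),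
        ← (S.T.map u₁).naturality_assoc (kernel.ι u₂), ← hc,
        ← Functor.map_comp_assoc, kernel.condition, Functor.map_zero, zero_comp, comp_zero]
    have h1 : kernel.ι u₂ ≫ (adj.homEquiv A₂ W) inr = 0 := by
      rw [← Adjunction.homEquiv_naturality_left, h0]
      simp [Adjunction.homEquiv_apply]
    have hr : (S.T.obj B₁).map u₂ ≫ (adj.homEquiv B₂ W).symm
        (Abelian.epiDesc u₂ ((adj.homEquiv A₂ W) inr) h1) = inr := by
      apply (adj.homEquiv A₂ W).injective
      rw [Adjunction.homEquiv_naturality_left, Equiv.apply_symm_apply, Abelian.comp_epiDesc]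
    refine ⟨_, ?_, hr⟩
    rw [← cancel_epi ((S.T.obj A₁).map u₂), reassoc_of% w, hr, hc]
  apply IsPushout.of_isColimit' ⟨w⟩
  exact PushoutCocone.IsColimit.mk w
    (fun s => (key s.inl s.inr s.condition).choose)
    (fun s => (key s.inl s.inr s.condition).choose_spec.1)
    (fun s => (key s.inl s.inr s.condition).choose_spec.2)
    (fun s m hm₁ hm₂ => by
      rw [← cancel_epi ((S.T.obj B₁).map u₂), hm₂,
        (key s.inl s.inr s.condition).choose_spec.2])
end

section
/- Let (T, H, C) be a biadditive THC-situation between abelian categories, where 𝒜₃ has an injective cogenerator E₃ and 𝒜₁ has a faithfully flat object P₁ (T(P₁, −) preserves monomorphisms and is faithful), and 𝒜₂ is complete. Then 𝒜₂ has enough injectives; moreover C(P₁, E₃) is an injective cogenerator of 𝒜₂. -/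
open CategoryTheory Limits Opposite

universe w v u v₁ u₁ v₂ u₂ v₃ u₃

variable {𝒜₁ : Type u₁} {𝒜₂ : Type u₂} {𝒜₃ : Type u₃}
  [Category.{v₁} 𝒜₁] [Category.{v₂} 𝒜₂] [Category.{v₃} 𝒜₃]
  [Abelian 𝒜₁] [Abelian 𝒜₂] [Abelian 𝒜₃]

/-- If `𝒜₃` has an injective cogenerator `E₃`, `𝒜₁` has a faithfully flat object
`P₁`, and `𝒜₂` is complete, then `𝒜₂` has enough injectives, and `C(P₁, E₃)` is
an injective cogenerator of `𝒜₂`. -/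
theorem statement14 (S : THC 𝒜₁ 𝒜₂ 𝒜₃) [HasLimits 𝒜₂]
    (E₃ : 𝒜₃) (hE₃inj : Injective E₃)
    (hE₃cog : ∀ ⦃X Y : 𝒜₃⦄ (f : X ⟶ Y), f ≠ 0 → ∃ h : Y ⟶ E₃, f ≫ h ≠ 0)
    (P₁ : 𝒜₁) (hP₁flat : S.Flat₁ P₁) (hP₁faith : (S.T.obj P₁).Faithful) :
    EnoughInjectives 𝒜₂ ∧ Injective ((S.C.obj (op P₁)).obj E₃) ∧
      (∀ ⦃X Y : 𝒜₂⦄ (f : X ⟶ Y), f ≠ 0 →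
        ∃ h : Y ⟶ (S.C.obj (op P₁)).obj E₃, f ≫ h ≠ 0) := by
  haveI := S.addC₂ (op P₁)
  haveI := S.addT₂ P₁
  haveI : (S.T.obj P₁).PreservesMonomorphisms := ⟨fun f hf => hP₁flat f hf⟩
  set E₂ := (S.C.obj (op P₁)).obj E₃ with hE₂
  have hinj : Injective E₂ := @Injective.injective_of_adjoint _ _ _ _ _ _ _ (S.adjT₂ P₁) E₃ hE₃inj
  have hcog : ∀ ⦃X Y : 𝒜₂⦄ (f : X ⟶ Y), f ≠ 0 → ∃ h : Y ⟶ E₂, f ≫ h ≠ 0 := by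
    intro X Y f hf
    have hTf : (S.T.obj P₁).map f ≠ 0 := by
      intro h0
      exact hf (hP₁faith.map_injective (by rw [h0, Functor.map_zero]))
    obtain ⟨h, hh⟩ := hE₃cog _ hTf
    refine ⟨(S.adjT₂ P₁).homEquiv Y E₃ h, ?_⟩
    rw [← Adjunction.homEquiv_naturality_left]
    intro h0
    apply hh
    have := ((S.adjT₂ P₁).homEquiv X E₃).injective
      (a₁ := (S.T.obj P₁).map f ≫ h) (a₂ := 0) ?_
    · exact this
    · rw [h0, Adjunction.homEquiv_apply, Functor.map_zero, comp_zero]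
  refine ⟨⟨fun X => ?_⟩, hinj, hcog⟩
  let ι := X ⟶ E₂
  let pr : 𝒜₂ := ∏ᶜ (fun _ : ι => E₂)
  haveI : Injective pr := by
    haveI : ∀ i : ι, Injective ((fun _ : ι => E₂) i) := fun _ => hinj
    infer_instance
  refine ⟨⟨pr, this, Pi.lift (fun h : ι => h), ?_⟩⟩
  apply Preadditive.mono_of_cancel_zero
  intro W g hg
  by_contra hne
  obtain ⟨h, hh⟩ := hcog g hne
  apply hh
  have := congrArg (fun k => k ≫ Pi.π (fun _ : ι => E₂) h) hg
  simpa using this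
end

section
/- Let (T, H, C) be a biadditive THC-situation between abelian categories, 𝒜₁ having a faithfully flat object P₁. An object P₂ of 𝒜₂ is faithfully flat if and only if for every composable pair (u₁, v₁) of morphisms in 𝒜₁, the pair (T(u₁, P₂), T(v₁, P₂)) is exact precisely when (u₁, v₁) is exact. -/
open CategoryTheory Limits Opposite

universe w v u v₁ u₁ v₂ u₂ v₃ u₃

variable {𝒜₁ : Type u₁} {𝒜₂ : Type u₂} {𝒜₃ : Type u₃}
  [Category.{v₁} 𝒜₁] [Category.{v₂} 𝒜₂] [Category.{v₃} 𝒜₃]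
  [Abelian 𝒜₁] [Abelian 𝒜₂] [Abelian 𝒜₃]

private theorem statement15_aux {𝒜₁ : Type u₁} {𝒜₃ : Type u₃}
    [Category.{v₁} 𝒜₁] [Category.{v₃} 𝒜₃] [Abelian 𝒜₁] [Abelian 𝒜₃]
    (F : 𝒜₁ ⥤ 𝒜₃) (G : 𝒜₃ ⥤ 𝒜₁) (adj : F ⊣ G) [F.Additive] :
    (F.PreservesMonomorphisms ∧ F.Faithful) ↔
      ∀ ⦃A' A A'' : 𝒜₁⦄ (u : A' ⟶ A) (v : A ⟶ A''),
        ((∃ w : u ≫ v = 0, (ShortComplex.mk u v w).Exact) ↔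
          (∃ w' : F.map u ≫ F.map v = 0,
            (ShortComplex.mk (F.map u) (F.map v) w').Exact)) := by
  constructor
  · rintro ⟨hflat, hfaith⟩
    haveI := hflat; haveI := hfaith
    haveI : PreservesColimitsOfSize.{0,0} F := adj.leftAdjoint_preservesColimits
    haveI : PreservesFiniteColimits F := inferInstance
    have h4 := ((F.preservesFiniteColimits_tfae).out 3 0).mp (by infer_instance)
    have h1 : ∀ (S : ShortComplex 𝒜₁), S.ShortExact →
        (S.map F).Exact ∧ Mono (F.map S.f) := fun S hS => by
      haveI := hS.mono_f
      exact ⟨(h4 S hS).1, F.map_mono S.f⟩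
    haveI : PreservesFiniteLimits F := ((F.preservesFiniteLimits_tfae).out 0 3).mp h1
    intro A' A A'' u v
    constructor
    · rintro ⟨w, hw⟩
      exact ⟨by rw [← F.map_comp, w, F.map_zero],
        ((ShortComplex.mk u v w).exact_map_iff_of_faithful F).mpr hw⟩
    · rintro ⟨w', hw'⟩
      have w : u ≫ v = 0 := F.map_injective (by rw [F.map_comp, F.map_zero]; exact w')
      exact ⟨w, ((ShortComplex.mk u v w).exact_map_iff_of_faithful F).mp hw'⟩
  · intro h
    constructor
    · refine ⟨fun {X Y} f hf => ?_⟩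
      obtain ⟨w', hw'⟩ := (h (0 : X ⟶ X) f).mp
        ⟨zero_comp, (ShortComplex.exact_iff_mono _ rfl).mpr hf⟩
      exact (ShortComplex.exact_iff_mono _ (F.map_zero X X)).mp hw'
    · refine ⟨fun {X Y} f g hfg => ?_⟩
      have hz : F.map (f - g) = 0 := by rw [F.map_sub, hfg, sub_self]
      obtain ⟨w, -⟩ := (h (f - g) (𝟙 Y)).mpr
        ⟨by rw [hz, zero_comp], (ShortComplex.exact_iff_mono _ hz).mpr
          (by rw [F.map_id]; infer_instance)⟩
      rw [Category.comp_id] at w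
      exact sub_eq_zero.mp w

/-- `P₂ ∈ 𝒜₂` is faithfully flat iff for every composable pair `(u₁, v₁)` in `𝒜₁`,
the pair `(T(u₁,P₂), T(v₁,P₂))` is exact precisely when `(u₁, v₁)` is exact. -/
theorem statement15 (S : THC 𝒜₁ 𝒜₂ 𝒜₃)
    (P₁ : 𝒜₁) (hP₁flat : S.Flat₁ P₁) (hP₁faith : (S.T.obj P₁).Faithful)
    (P₂ : 𝒜₂) :
    (S.Flat₂ P₂ ∧ (S.T.flip.obj P₂).Faithful) ↔
      ∀ ⦃A' A A'' : 𝒜₁⦄ (u : A' ⟶ A) (v : A ⟶ A''),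
        ((∃ w : u ≫ v = 0, (ShortComplex.mk u v w).Exact) ↔
          (∃ w' : (S.T.flip.obj P₂).map u ≫ (S.T.flip.obj P₂).map v = 0,
            (ShortComplex.mk ((S.T.flip.obj P₂).map u)
              ((S.T.flip.obj P₂).map v) w').Exact)) := by
  
  letI : (S.T.flip.obj P₂).Additive := S.addT₁ P₂
  have key := statement15_aux (S.T.flip.obj P₂) _ (S.adjT₁ P₂)
  constructor
  · rintro ⟨h1, h2⟩
    exact key.mp ⟨⟨fun f hf => h1 f hf⟩, h2⟩
  · intro h
    obtain ⟨hm, hf⟩ := key.mpr h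
    refine ⟨fun X Y f hmono => ?_, hf⟩
    haveI := hmono
    exact Functor.map_mono _ f
end
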